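/- arXiv:2405.13556 — 2 statements merged into one kernel-verified Lean document; each statement's English description precedes it below -/
import Mathlib

section
/- Let A be an invertible block matrix over a field, block upper triangular with square diagonal blocks A_{1,1}, …, A_{M,M}. Then B = A⁻¹ is block upper triangular with the same block structure, and for j ≤ k the block B_{j,k} equals the sum, over all integer tuples (i₁,…,i_ℓ) with j = i₁ < i₂ < ⋯ < i_ℓ = k, of (−1)^{ℓ−1} A_{i₁,i₁}⁻¹ A_{i₁,i₂} A_{i₂,i₂}⁻¹ ⋯ A_{i_{ℓ−1},i_ℓ} A_{i_ℓ,i_ℓ}⁻¹. -/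
/-! Write `B = A⁻¹`. It is block upper triangular, so the `(j,k)` block of `A * B = 1` reads
`A_{jj} B_{jk} + ∑_{j<m≤k} A_{jm} B_{mk} = δ_{jk}`. Hence `B_{jj} = A_{jj}⁻¹` and, for `j < k`,
`B_{jk} = -A_{jj}⁻¹ ∑_{j<m≤k} A_{jm} B_{mk}`, which determines `B` by downward induction on `j`.
The chain sum obeys the same recursion: a chain `j = i₁ < i₂ < ⋯ < i_ℓ = k` is `j` followed by a
chain from `m = i₂` to `k`, and dropping `j` flips the sign `(-1)^{ℓ-1}` once. -/

open Matrix

variable {K : Type*} [Field K] {M : ℕ} {n : Fin M → ℕ}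

/-- The `(j,k)` block of a matrix indexed by `Σ j, Fin (n j)`. -/
def getBlock (A : Matrix (Σ j : Fin M, Fin (n j)) (Σ j : Fin M, Fin (n j)) K)
    (j k : Fin M) : Matrix (Fin (n j)) (Fin (n k)) K :=
  fun a b => A ⟨j, a⟩ ⟨k, b⟩

/-- Embed a `(j,k)` block back into a full-size matrix (zero elsewhere). -/
def embedBlock (j k : Fin M) (X : Matrix (Fin (n j)) (Fin (n k)) K) :
    Matrix (Σ j : Fin M, Fin (n j)) (Σ j : Fin M, Fin (n j)) K :=
  fun p q =>
    if hp : p.1 = j then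
      if hq : q.1 = k then X (Fin.cast (congrArg n hp) p.2) (Fin.cast (congrArg n hq) q.2)
      else 0
    else 0

/-- The inverse of the `j`-th diagonal block, embedded as a full-size matrix. -/
noncomputable def diagInv (A : Matrix (Σ j : Fin M, Fin (n j)) (Σ j : Fin M, Fin (n j)) K)
    (j : Fin M) : Matrix (Σ j : Fin M, Fin (n j)) (Σ j : Fin M, Fin (n j)) K :=
  embedBlock j j (getBlock A j j)⁻¹

/-- The alternating product `A_{i₁,i₁}⁻¹ A_{i₁,i₂} A_{i₂,i₂}⁻¹ ⋯ A_{i_{ℓ-1},i_ℓ} A_{i_ℓ,i_ℓ}⁻¹`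
along a list of block indices, assembled from full-size embedded blocks. -/
noncomputable def chainProd (A : Matrix (Σ j : Fin M, Fin (n j)) (Σ j : Fin M, Fin (n j)) K) :
    List (Fin M) → Matrix (Σ j : Fin M, Fin (n j)) (Σ j : Fin M, Fin (n j)) K
  | [] => 1
  | [i] => diagInv A i
  | i :: j :: t => diagInv A i * embedBlock i j (getBlock A i j) * chainProd A (j :: t)

open Finset

theorem sort_eq_cons_erase {α : Type*} [LinearOrder α] {s : Finset α} {a : α} (ha : a ∈ s)
    (hmin : ∀ b ∈ s, a ≤ b) :
    s.sort (· ≤ ·) = a :: (s.erase a).sort (· ≤ ·) := by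
  conv_lhs => rw [← insert_erase ha]
  exact sort_insert _ (fun b hb => hmin b (mem_of_mem_erase hb)) (notMem_erase a s)

section Chains

variable {α : Type*} [LinearOrder α] [LocallyFiniteOrder α]

/-- Increasing tuples `j = i₁ < ⋯ < i_ℓ = k`, encoded by their sets of entries. -/
def chainsFromTo (j k : α) : Finset (Finset α) :=
  (Icc j k).powerset.filter (fun s => j ∈ s ∧ k ∈ s)

theorem mem_chainsFromTo {j k : α} {s : Finset α} :
    s ∈ chainsFromTo j k ↔ j ∈ s ∧ k ∈ s ∧ ∀ x ∈ s, j ≤ x ∧ x ≤ k := by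
  simp only [chainsFromTo, mem_filter, mem_powerset, subset_iff, mem_Icc]
  tauto

theorem chainsFromTo_self (j : α) : chainsFromTo j j = {{j}} := by
  ext s
  simp only [mem_chainsFromTo, mem_singleton]
  constructor
  · rintro ⟨hj, -, hs⟩
    exact eq_singleton_iff_unique_mem.2 ⟨hj, fun x hx => le_antisymm (hs x hx).2 (hs x hx).1⟩
  · rintro rfl
    simp

theorem sum_chainsFromTo_of_lt {β : Type*} [AddCommMonoid β] {j k : α} (hjk : j < k)
    (f : Finset α → β) :
    ∑ s ∈ chainsFromTo j k, f s = ∑ m ∈ Ioc j k, ∑ t ∈ chainsFromTo m k, f (insert j t) := by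
  rw [sum_sigma']
  symm
  refine sum_bij' (fun x _ => insert j x.2)
    (fun s hs => ⟨(s.erase j).min' ⟨k, mem_erase.2 ⟨hjk.ne', (mem_chainsFromTo.1 hs).2.1⟩⟩,
      s.erase j⟩) ?_ ?_ ?_ ?_ (fun _ _ => rfl)
  · rintro ⟨m, t⟩ h
    simp only [mem_sigma, mem_Ioc, mem_chainsFromTo, mem_insert] at h ⊢
    grind
  · intro s hs
    simp only [mem_sigma, mem_Ioc, mem_chainsFromTo] at hs ⊢
    grind [min'_mem, min'_le]
  · rintro ⟨m, t⟩ h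
    simp only [mem_sigma, mem_Ioc, mem_chainsFromTo] at h
    grind [min'_eq_iff, erase_insert]
  · intro s hs
    exact insert_erase (mem_chainsFromTo.1 hs).1

end Chains

theorem blockTriangular_nonsing_inv {α m R : Type*} [LinearOrder α] [Fintype m] [DecidableEq m]
    [CommRing R] {A : Matrix m m R} {b : m → α} (hA : A.BlockTriangular b) :
    A⁻¹.BlockTriangular b := by
  by_cases h : IsUnit A.det
  · have : Invertible A := A.invertibleOfIsUnitDet h
    exact blockTriangular_inv_of_blockTriangular hA
  · rw [nonsing_inv_apply_not_isUnit A h]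
    exact blockTriangular_zero

section Blocks

local notation "BlockMatrix" => Matrix (Σ j : Fin M, Fin (n j)) (Σ j : Fin M, Fin (n j)) K

theorem getBlock_mul (X Y : BlockMatrix) (j k : Fin M) :
    getBlock (X * Y) j k = ∑ m, getBlock X j m * getBlock Y m k := by
  ext a b
  simp [getBlock, mul_apply, Matrix.sum_apply, ← univ_sigma_univ, sum_sigma]

theorem getBlock_eq_zero_of_blockTriangular {X : BlockMatrix} (hX : X.BlockTriangular Sigma.fst)
    {j k : Fin M} (hkj : k < j) : getBlock X j k = 0 := by
  ext a b
  exact hX hkj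

theorem getBlock_mul_of_blockTriangular {X Y : BlockMatrix} (hX : X.BlockTriangular Sigma.fst)
    (hY : Y.BlockTriangular Sigma.fst) (j k : Fin M) :
    getBlock (X * Y) j k = ∑ m ∈ Icc j k, getBlock X j m * getBlock Y m k := by
  rw [getBlock_mul]
  refine (sum_subset (subset_univ _) fun m _ hm => ?_).symm
  rw [mem_Icc, not_and_or, not_le, not_le] at hm
  rcases hm with hmj | hkm
  · rw [getBlock_eq_zero_of_blockTriangular hX hmj, Matrix.zero_mul]
  · rw [getBlock_eq_zero_of_blockTriangular hY hkm, Matrix.mul_zero]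

theorem getBlock_one_self (j : Fin M) : getBlock (1 : BlockMatrix) j j = 1 := by
  ext a b
  simp [getBlock, one_apply]

theorem getBlock_one_of_ne {j k : Fin M} (h : j ≠ k) : getBlock (1 : BlockMatrix) j k = 0 := by
  ext a b
  simp [getBlock, one_apply, h]

theorem getBlock_sum {ι : Type*} (s : Finset ι) (X : ι → BlockMatrix) (j k : Fin M) :
    getBlock (∑ i ∈ s, X i) j k = ∑ i ∈ s, getBlock (X i) j k := by
  ext a b
  simp [getBlock, Matrix.sum_apply]

theorem getBlock_smul (c : K) (X : BlockMatrix) (j k : Fin M) :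
    getBlock (c • X) j k = c • getBlock X j k :=
  rfl

theorem getBlock_embedBlock (j k : Fin M) (X : Matrix (Fin (n j)) (Fin (n k)) K) :
    getBlock (embedBlock j k X) j k = X := by
  ext a b
  simp [getBlock, embedBlock]

theorem getBlock_embedBlock_of_ne {j k j' k' : Fin M} (h : j' ≠ j ∨ k' ≠ k)
    (X : Matrix (Fin (n j)) (Fin (n k)) K) : getBlock (embedBlock j k X) j' k' = 0 := by
  ext a b
  rcases h with h | h <;> simp [getBlock, embedBlock, h]

theorem getBlock_embedBlock_mul (j m k : Fin M) (X : Matrix (Fin (n j)) (Fin (n m)) K)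
    (Y : BlockMatrix) : getBlock (embedBlock j m X * Y) j k = X * getBlock Y m k := by
  rw [getBlock_mul, sum_eq_single m]
  · rw [getBlock_embedBlock]
  · intro m' _ hm'
    rw [getBlock_embedBlock_of_ne (Or.inr hm'), Matrix.zero_mul]
  · simp

variable (A : Matrix (Σ j : Fin M, Fin (n j)) (Σ j : Fin M, Fin (n j)) K)

theorem getBlock_chainProd_singleton (j : Fin M) :
    getBlock (chainProd A [j]) j j = (getBlock A j j)⁻¹ :=
  getBlock_embedBlock j j _

theorem getBlock_chainProd_cons_cons (i m : Fin M) (l : List (Fin M)) (k : Fin M) :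
    getBlock (chainProd A (i :: m :: l)) i k =
      (getBlock A i i)⁻¹ * (getBlock A i m * getBlock (chainProd A (m :: l)) m k) := by
  rw [chainProd, diagInv, Matrix.mul_assoc, getBlock_embedBlock_mul, getBlock_embedBlock_mul]

noncomputable def chainSum (j k : Fin M) : BlockMatrix :=
  ∑ s ∈ chainsFromTo j k, (-1 : K) ^ (#s - 1) • chainProd A (s.sort (· ≤ ·))

theorem getBlock_chainSum_self (j : Fin M) :
    getBlock (chainSum A j j) j j = (getBlock A j j)⁻¹ := by
  simp [chainSum, chainsFromTo_self, getBlock_chainProd_singleton]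

theorem getBlock_chainSum_of_lt {j k : Fin M} (hjk : j < k) :
    getBlock (chainSum A j k) j k =
      -((getBlock A j j)⁻¹ * ∑ m ∈ Ioc j k, getBlock A j m * getBlock (chainSum A m k) m k) := by
  simp only [chainSum, getBlock_sum, sum_chainsFromTo_of_lt hjk, Matrix.mul_sum, ← sum_neg_distrib]
  refine sum_congr rfl fun m hm => sum_congr rfl fun t ht => ?_
  obtain ⟨hmt, -, ht⟩ := mem_chainsFromTo.1 ht
  have hmin : ∀ x ∈ t, m ≤ x := fun x hx => (ht x hx).1
  have hjt : ∀ x ∈ t, j < x := fun x hx => (mem_Ioc.1 hm).1.trans_le (hmin x hx)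
  have hj : j ∉ t := fun h => (hjt j h).false
  have hsort : (insert j t).sort (· ≤ ·) = j :: m :: (t.erase m).sort (· ≤ ·) := by
    rw [sort_insert _ (fun x hx => (hjt x hx).le) hj, sort_eq_cons_erase hmt hmin]
  have hcard : #(insert j t) - 1 = (#t - 1) + 1 := by
    rw [card_insert_of_notMem hj, Nat.sub_add_cancel (card_pos.2 ⟨m, hmt⟩), Nat.add_sub_cancel]
  rw [hsort, getBlock_smul, getBlock_chainProd_cons_cons, ← sort_eq_cons_erase hmt hmin, hcard,
    getBlock_smul, pow_succ, mul_neg_one, neg_smul, Matrix.mul_smul, Matrix.mul_smul]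

variable {A}

section Inverse

variable (hA : IsUnit A.det) (htri : A.BlockTriangular Sigma.fst)
include hA htri

theorem getBlock_mul_getBlock_inv_self (j : Fin M) : getBlock A j j * getBlock A⁻¹ j j = 1 := by
  rw [← getBlock_one_self j, ← mul_nonsing_inv A hA,
    getBlock_mul_of_blockTriangular htri (blockTriangular_nonsing_inv htri), Icc_self, sum_singleton]

theorem getBlock_inv_self (j : Fin M) : getBlock A⁻¹ j j = (getBlock A j j)⁻¹ :=
  (inv_eq_right_inv (getBlock_mul_getBlock_inv_self hA htri j)).symm

theorem getBlock_inv_of_lt {j k : Fin M} (hjk : j < k) :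
    getBlock A⁻¹ j k =
      -((getBlock A j j)⁻¹ * ∑ m ∈ Ioc j k, getBlock A j m * getBlock A⁻¹ m k) := by
  have hrow : getBlock A j j * getBlock A⁻¹ j k + ∑ m ∈ Ioc j k, getBlock A j m * getBlock A⁻¹ m k
      = 0 := by
    rw [← sum_insert (f := fun m => getBlock A j m * getBlock A⁻¹ m k) left_notMem_Ioc,
      Ioc_insert_left hjk.le,
      ← getBlock_mul_of_blockTriangular htri (blockTriangular_nonsing_inv htri),
      mul_nonsing_inv A hA, getBlock_one_of_ne hjk.ne]
  have hinv : (getBlock A j j)⁻¹ * getBlock A j j = 1 := by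
    rw [← getBlock_inv_self hA htri]
    exact mul_eq_one_comm.1 (getBlock_mul_getBlock_inv_self hA htri j)
  calc getBlock A⁻¹ j k = (getBlock A j j)⁻¹ * (getBlock A j j * getBlock A⁻¹ j k) := by
        rw [← Matrix.mul_assoc, hinv, Matrix.one_mul]
    _ = _ := by rw [eq_neg_of_add_eq_zero_left hrow, Matrix.mul_neg]

end Inverse

end Blocks

theorem block_triangular_inverse_general
    (A : Matrix (Σ j : Fin M, Fin (n j)) (Σ j : Fin M, Fin (n j)) K)
    (hA : IsUnit A.det)
    (htri : ∀ p q : (Σ j : Fin M, Fin (n j)), q.1 < p.1 → A p q = 0) :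
    (∀ p q : (Σ j : Fin M, Fin (n j)), q.1 < p.1 → A⁻¹ p q = 0) ∧
    ∀ j k : Fin M, j ≤ k →
      getBlock A⁻¹ j k =
        getBlock (∑ s ∈ (Finset.Icc j k).powerset.filter (fun s => j ∈ s ∧ k ∈ s),
          ((-1 : K) ^ (s.card - 1)) • chainProd A (s.sort (· ≤ ·))) j k := by
  have htri' : A.BlockTriangular Sigma.fst := fun p q h => htri p q h
  refine ⟨fun p q h => blockTriangular_nonsing_inv htri' h, fun j k hjk => ?_⟩
  change getBlock A⁻¹ j k = getBlock (chainSum A j k) j k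
  induction j using WellFoundedGT.induction with
  | _ j ih =>
    rcases hjk.eq_or_lt with rfl | hlt
    · rw [getBlock_inv_self hA htri', getBlock_chainSum_self]
    · rw [getBlock_inv_of_lt hA htri' hlt, getBlock_chainSum_of_lt A hlt]
      congr 2
      exact sum_congr rfl fun m hm => by rw [ih m (mem_Ioc.1 hm).1 (mem_Ioc.1 hm).2]

/-- Inverse of a block upper triangular matrix: `A⁻¹` is block upper triangular, and for
`j ≤ k` its `(j,k)` block is the sum over strictly increasing tuples `j = i₁ < ⋯ < i_ℓ = k`
(encoded as finsets `s ⊆ [j,k]` containing `j` and `k`) of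
`(−1)^{ℓ−1} A_{i₁,i₁}⁻¹ A_{i₁,i₂} A_{i₂,i₂}⁻¹ ⋯ A_{i_{ℓ−1},i_ℓ} A_{i_ℓ,i_ℓ}⁻¹`. -/
theorem block_triangular_inverse
    (A : Matrix (Σ j : Fin M, Fin (n j)) (Σ j : Fin M, Fin (n j)) K)
    (hA : IsUnit A.det)
    (htri : ∀ p q : (Σ j : Fin M, Fin (n j)), q.1 < p.1 → A p q = 0)
    (hdiag : ∀ j : Fin M, IsUnit (getBlock A j j).det) :
    (∀ p q : (Σ j : Fin M, Fin (n j)), q.1 < p.1 → A⁻¹ p q = 0) ∧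
    ∀ j k : Fin M, j ≤ k →
      getBlock A⁻¹ j k =
        getBlock (∑ s ∈ (Finset.Icc j k).powerset.filter (fun s => j ∈ s ∧ k ∈ s),
          ((-1 : K) ^ (s.card - 1)) • chainProd A (s.sort (· ≤ ·))) j k :=
  block_triangular_inverse_general A hA htri
end

section
/- Let Π be a real N×N matrix that is an infinitesimal generator (Metzler with all row sums zero), and let Λ be a nonnegative diagonal matrix such that every final class of Π contains a state n with Λ_{nn} > 0. Then ζ(Π − Λ) < 0. -/
open Matrix

/-- The spectral abscissa of a real square matrix. -/
noncomputable def specAbs {n : Type*} [Fintype n] [DecidableEq n]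
    (A : Matrix n n ℝ) : ℝ :=
  sSup (Complex.re '' spectrum ℂ (A.map (algebraMap ℝ ℂ)))

variable {N : ℕ}

/-- Access relation of the directed graph of nonzero off-diagonal entries. -/
def access (B : Matrix (Fin N) (Fin N) ℝ) : Fin N → Fin N → Prop :=
  Relation.ReflTransGen (fun i j => i ≠ j ∧ B i j ≠ 0)

/-- A class of `B` (strongly connected component of its directed graph). -/
def IsClass (B : Matrix (Fin N) (Fin N) ℝ) (γ : Set (Fin N)) : Prop :=
  ∃ m : Fin N, γ = {n' : Fin N | access B m n' ∧ access B n' m}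

/-- Class `γ` has access to class `δ`. -/
def classAccess (B : Matrix (Fin N) (Fin N) ℝ) (γ δ : Set (Fin N)) : Prop :=
  ∃ m ∈ γ, ∃ n' ∈ δ, access B m n'

/-- A final class: a class having access to no other class. -/
def IsFinalClass (B : Matrix (Fin N) (Fin N) ℝ) (γ : Set (Fin N)) : Prop :=
  IsClass B γ ∧ ∀ δ : Set (Fin N), IsClass B δ → δ ≠ γ → ¬ classAccess B γ δ

/-!
Write `B = Π − Λ`; it is Metzler with row sums `−Λ_ii ≤ 0`, and `B + sI` is nonnegative for
large `s`. If `Bx = μx` with `x ≠ 0` and `Re μ ≥ 0`, the triangle inequality for `(μ + s) x_i`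
at a coordinate `i` of maximal modulus is squeezed between `(Re μ + s)|x_i|` and
`(s − Λ_ii)|x_i|`, so `Λ_ii = 0` and `|x_j| = |x_i|` whenever `B_ij ≠ 0`. Maximal coordinates
therefore propagate along access, and from every state one reaches a final class, which
contains a state `n` with `Λ_nn > 0`.
-/

open Finset

theorem Relation.exists_reflTransGen_forall_reflTransGen_back {α : Type*} [Finite α]
    (r : α → α → Prop) (a : α) :
    ∃ b, ReflTransGen r a b ∧ ∀ c, ReflTransGen r b c → ReflTransGen r c b := by
  obtain ⟨b, hab, hmin⟩ := exists_minimalFor_of_wellFoundedLT (ReflTransGen r a)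
    (fun b => {c | ReflTransGen r b c}) ⟨a, .refl⟩
  refine ⟨b, hab, fun c hbc => ?_⟩
  have hsub : {d | ReflTransGen r c d} ⊆ {d | ReflTransGen r b d} := fun d hcd => hbc.trans hcd
  exact hmin (hab.trans hbc) hsub (ReflTransGen.refl : ReflTransGen r b b)

theorem setOf_access_and_access_eq {B : Matrix (Fin N) (Fin N) ℝ} {m n : Fin N}
    (hmn : access B m n) (hnm : access B n m) :
    {p | access B m p ∧ access B p m} = {p | access B n p ∧ access B p n} := by
  ext p
  exact ⟨fun ⟨h₁, h₂⟩ => ⟨hnm.trans h₁, h₂.trans hmn⟩,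
    fun ⟨h₁, h₂⟩ => ⟨hmn.trans h₁, h₂.trans hnm⟩⟩

theorem isFinalClass_of_forall_access_back {B : Matrix (Fin N) (Fin N) ℝ} {n : Fin N}
    (hn : ∀ b, access B n b → access B b n) :
    IsFinalClass B {p | access B n p ∧ access B p n} := by
  refine ⟨⟨n, rfl⟩, ?_⟩
  rintro δ ⟨m, rfl⟩ hne ⟨a, ha, b, hb, hab⟩
  have hnb : access B n b := ha.1.trans hab
  exact hne (setOf_access_and_access_eq (hb.1.trans (hn b hnb)) (hnb.trans hb.2))

theorem exists_access_pos_of_forall_isFinalClass {B : Matrix (Fin N) (Fin N) ℝ} {d : Fin N → ℝ}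
    (hd : ∀ γ : Set (Fin N), IsFinalClass B γ → ∃ n ∈ γ, 0 < d n) (m : Fin N) :
    ∃ n, access B m n ∧ 0 < d n := by
  obtain ⟨b, hmb, hb⟩ := Relation.exists_reflTransGen_forall_reflTransGen_back _ m
  obtain ⟨n, hn, hdn⟩ := hd _ (isFinalClass_of_forall_access_back hb)
  exact ⟨n, hmb.trans hn.1, hdn⟩

theorem access_sub_diagonal (B : Matrix (Fin N) (Fin N) ℝ) (d : Fin N → ℝ) :
    access (B - diagonal d) = access B := by
  have hoff : (fun i j => i ≠ j ∧ (B - diagonal d) i j ≠ 0) = fun i j => i ≠ j ∧ B i j ≠ 0 := by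
    ext i j
    exact and_congr_right fun hij => by rw [Matrix.sub_apply, diagonal_apply_ne _ hij, sub_zero]
  rw [access, access, hoff]

section Spectrum

variable {ι : Type*} [Fintype ι] [DecidableEq ι]

theorem Matrix.exists_mulVec_eq_smul_of_mem_spectrum {M : Matrix ι ι ℂ} {μ : ℂ}
    (hμ : μ ∈ spectrum ℂ M) : ∃ x ≠ 0, M *ᵥ x = μ • x := by
  rw [← spectrum_toLin', ← Module.End.hasEigenvalue_iff_mem_spectrum] at hμ
  obtain ⟨x, hx⟩ := hμ.exists_hasEigenvector
  exact ⟨x, hx.2, by simpa using hx.apply_eq_smul⟩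

theorem specAbs_neg_of_forall_re_neg [Nonempty ι] {A : Matrix ι ι ℝ}
    (h : ∀ μ ∈ spectrum ℂ (A.map (algebraMap ℝ ℂ)), μ.re < 0) : specAbs A < 0 := by
  set M := A.map (algebraMap ℝ ℂ)
  obtain ⟨μ, hμ⟩ := Module.End.exists_eigenvalue (toLin' M)
  have hne : (spectrum ℂ M).Nonempty := ⟨μ, spectrum_toLin' M ▸ hμ.mem_spectrum⟩
  refine ((M.finite_spectrum.image _).csSup_lt_iff (hne.image _)).mpr ?_
  rintro _ ⟨ν, hν, rfl⟩
  exact h ν hν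

end Spectrum

section Eigenvector

variable {ι : Type*} [Fintype ι]

theorem eq_of_sum_mul_le_sum_mul {w y : ι → ℝ} {c : ℝ} (hw : ∀ j, 0 ≤ w j) (hy : ∀ j, y j ≤ c)
    (h : (∑ j, w j) * c ≤ ∑ j, w j * y j) {j : ι} (hj : w j ≠ 0) : y j = c := by
  have hterm : ∀ k ∈ univ, 0 ≤ w k * (c - y k) := fun k _ =>
    mul_nonneg (hw k) (sub_nonneg.2 (hy k))
  have hsum : ∑ k, w k * (c - y k) = 0 := by
    have : ∑ k, w k * (c - y k) = (∑ k, w k) * c - ∑ k, w k * y k := by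
      simp only [mul_sub, sum_sub_distrib, sum_mul]
    exact le_antisymm (by linarith) (sum_nonneg hterm)
  have hj' := (sum_eq_zero_iff_of_nonneg hterm).1 hsum j (mem_univ j)
  linarith [(mul_eq_zero.1 hj').resolve_left hj]

theorem norm_mul_norm_le_sum_of_mulVec_eq_smul {A : Matrix ι ι ℝ} (hA : ∀ i j, 0 ≤ A i j)
    {x : ι → ℂ} {ν : ℂ} (hx : A.map (algebraMap ℝ ℂ) *ᵥ x = ν • x) (i : ι) :
    ‖ν‖ * ‖x i‖ ≤ ∑ j, A i j * ‖x j‖ :=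
  calc ‖ν‖ * ‖x i‖ = ‖∑ j, (A i j : ℂ) * x j‖ := by
        rw [← norm_mul, ← smul_eq_mul, ← Pi.smul_apply, ← hx]
        simp [mulVec, dotProduct]
    _ ≤ ∑ j, ‖(A i j : ℂ) * x j‖ := norm_sum_le _ _
    _ = ∑ j, A i j * ‖x j‖ := by simp [Complex.norm_real, abs_of_nonneg (hA i _)]

theorem norm_le_sum_of_mulVec_eq_smul {A : Matrix ι ι ℝ} (hA : ∀ i j, 0 ≤ A i j)
    {x : ι → ℂ} {ν : ℂ} (hx : A.map (algebraMap ℝ ℂ) *ᵥ x = ν • x) (hx0 : x ≠ 0) {i : ι}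
    (hi : ∀ j, ‖x j‖ ≤ ‖x i‖) : ‖ν‖ ≤ ∑ j, A i j := by
  obtain ⟨k, hk⟩ := Function.ne_iff.1 hx0
  have hxi : 0 < ‖x i‖ := (norm_pos_iff.2 hk).trans_le (hi k)
  refine le_of_mul_le_mul_right ?_ hxi
  calc ‖ν‖ * ‖x i‖ ≤ ∑ j, A i j * ‖x j‖ := norm_mul_norm_le_sum_of_mulVec_eq_smul hA hx i
    _ ≤ ∑ j, A i j * ‖x i‖ := sum_le_sum fun j _ => mul_le_mul_of_nonneg_left (hi j) (hA i j)
    _ = (∑ j, A i j) * ‖x i‖ := (sum_mul _ _ _).symm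

theorem norm_eq_of_mulVec_eq_smul_of_sum_le {A : Matrix ι ι ℝ} (hA : ∀ i j, 0 ≤ A i j)
    {x : ι → ℂ} {ν : ℂ} (hx : A.map (algebraMap ℝ ℂ) *ᵥ x = ν • x) {i : ι}
    (hi : ∀ j, ‖x j‖ ≤ ‖x i‖) (hν : ∑ j, A i j ≤ ‖ν‖) {j : ι} (hij : A i j ≠ 0) :
    ‖x j‖ = ‖x i‖ :=
  eq_of_sum_mul_le_sum_mul (hA i) hi
    ((mul_le_mul_of_nonneg_right hν (norm_nonneg _)).trans
      (norm_mul_norm_le_sum_of_mulVec_eq_smul hA hx i)) hij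

variable [DecidableEq ι]

theorem sum_sub_diagonal_apply (B : Matrix ι ι ℝ) (d : ι → ℝ) (i : ι) :
    ∑ j, (B - diagonal d) i j = ∑ j, B i j - d i := by
  simp [sum_sub_distrib, diagonal_apply]

theorem exists_nonneg_add_diagonal_const {B : Matrix ι ι ℝ} (hB : ∀ i j, i ≠ j → 0 ≤ B i j) :
    ∃ s : ℝ, ∀ i j, 0 ≤ (B + diagonal fun _ => s : Matrix ι ι ℝ) i j := by
  refine ⟨∑ k, |B k k|, fun i j => ?_⟩
  rcases eq_or_ne i j with rfl | hij
  · have : |B i i| ≤ ∑ k, |B k k| := single_le_sum (f := fun k => |B k k|)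
      (fun k _ => abs_nonneg _) (mem_univ i)
    rw [Matrix.add_apply, diagonal_apply_eq]
    linarith [neg_abs_le (B i i)]
  · rw [Matrix.add_apply, diagonal_apply_ne _ hij, add_zero]
    exact hB i j hij

theorem sum_eq_zero_and_norm_eq_of_mulVec_eq_smul {B : Matrix ι ι ℝ}
    (hB : ∀ i j, i ≠ j → 0 ≤ B i j) (hrow : ∀ i, ∑ j, B i j ≤ 0) {x : ι → ℂ} {μ : ℂ}
    (hx : B.map (algebraMap ℝ ℂ) *ᵥ x = μ • x) (hx0 : x ≠ 0) (hμ : 0 ≤ μ.re) {i : ι}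
    (hi : ∀ j, ‖x j‖ ≤ ‖x i‖) :
    ∑ j, B i j = 0 ∧ ∀ j, i ≠ j → B i j ≠ 0 → ‖x j‖ = ‖x i‖ := by
  obtain ⟨s, hA⟩ := exists_nonneg_add_diagonal_const hB
  set A := B + diagonal fun _ => s
  have hAx : A.map (algebraMap ℝ ℂ) *ᵥ x = (μ + s) • x := by
    ext k
    have hk := congrFun hx k
    simp only [Pi.smul_apply, smul_eq_mul, Complex.coe_algebraMap] at hk
    simp [A, Matrix.map_add, add_mulVec, hk, add_mul]
  have hAsum : ∑ j, A i j = ∑ j, B i j + s := by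
    simp [A, sum_add_distrib, diagonal_apply]
  have hre : μ.re + s ≤ ‖μ + s‖ := by
    simpa using Complex.re_le_norm (μ + s)
  have hle := norm_le_sum_of_mulVec_eq_smul hA hAx hx0 hi
  have hsum : ∑ j, B i j = 0 := le_antisymm (hrow i) (by linarith)
  refine ⟨hsum, fun j hij hBij => norm_eq_of_mulVec_eq_smul_of_sum_le hA hAx hi (by linarith) ?_⟩
  simpa [A, diagonal_apply_ne _ hij] using hBij

end Eigenvector

theorem forall_norm_le_of_access {B : Matrix (Fin N) (Fin N) ℝ}
    (hB : ∀ i j, i ≠ j → 0 ≤ B i j) (hrow : ∀ i, ∑ j, B i j ≤ 0) {x : Fin N → ℂ} {μ : ℂ}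
    (hx : B.map (algebraMap ℝ ℂ) *ᵥ x = μ • x) (hx0 : x ≠ 0) (hμ : 0 ≤ μ.re) {i n : Fin N}
    (hi : ∀ j, ‖x j‖ ≤ ‖x i‖) (hin : access B i n) : ∀ j, ‖x j‖ ≤ ‖x n‖ := by
  induction hin with
  | refl => exact hi
  | tail _ hcd hc =>
    rw [(sum_eq_zero_and_norm_eq_of_mulVec_eq_smul hB hrow hx hx0 hμ hc).2 _ hcd.1 hcd.2]
    exact hc

/-- Let `Π` be an infinitesimal generator matrix (Metzler with zero row sums) and `Λ`
a nonnegative diagonal matrix whose diagonal is positive somewhere in each final class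
of `Π`.  Then `ζ(Π − Λ) < 0`. -/
theorem generator_sub_diagonal_specAbs_neg (hN : 0 < N)
    (P : Matrix (Fin N) (Fin N) ℝ)
    (hMetzler : ∀ i j, i ≠ j → 0 ≤ P i j)
    (hrow : ∀ i, ∑ j, P i j = 0)
    (lam : Fin N → ℝ) (hlam : ∀ i, 0 ≤ lam i)
    (hfinal : ∀ γ : Set (Fin N), IsFinalClass P γ → ∃ n' ∈ γ, 0 < lam n') :
    specAbs (P - Matrix.diagonal lam) < 0 := by
  have : Nonempty (Fin N) := ⟨⟨0, hN⟩⟩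
  set B := P - diagonal lam
  have hB : ∀ i j, i ≠ j → 0 ≤ B i j := fun i j hij => by
    simpa [B, diagonal_apply_ne _ hij] using hMetzler i j hij
  have hBrow : ∀ i, ∑ j, B i j = -lam i := fun i => by
    rw [sum_sub_diagonal_apply, hrow, zero_sub]
  have hBrow_nonpos : ∀ i, ∑ j, B i j ≤ 0 := fun i => by linarith [hBrow i, hlam i]
  refine specAbs_neg_of_forall_re_neg fun μ hμ => ?_
  by_contra! hμ0
  obtain ⟨x, hx0, hx⟩ := exists_mulVec_eq_smul_of_mem_spectrum hμ
  obtain ⟨i, hi⟩ := Finite.exists_max fun j => ‖x j‖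
  obtain ⟨n, hin, hn⟩ := exists_access_pos_of_forall_isFinalClass hfinal i
  have hn_max := forall_norm_le_of_access hB hBrow_nonpos hx hx0 hμ0 hi
    (by rwa [access_sub_diagonal])
  have hsum_n := (sum_eq_zero_and_norm_eq_of_mulVec_eq_smul hB hBrow_nonpos hx hx0 hμ0 hn_max).1
  linarith [hBrow n]
end
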